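/- For any path connected finite T₀ space P, the topological complexity equals the combinatorial complexity: TC(P) = CC(P). -/

import Mathlib

open Set

/-- The finite fence poset `0 < 1 > 2 < ⋯ m` on `m+1` points. -/
def J (m : ℕ) : Type := Fin (m + 1)

namespace J

/-- The underlying natural number of a point of the fence. -/
def val {m : ℕ} (i : J m) : ℕ := @Fin.val (m + 1) i

instance (m : ℕ) : PartialOrder (J m) where
  le i j := i.val = j.val ∨ (j.val % 2 = 1 ∧ (j.val = i.val + 1 ∨ i.val = j.val + 1))
  le_refl i := Or.inl rfl
  le_trans a b c h₁ h₂ := by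
    show a.val = c.val ∨ (c.val % 2 = 1 ∧ (c.val = a.val + 1 ∨ a.val = c.val + 1))
    rcases h₁ with h₁ | h₁ <;> rcases h₂ with h₂ | h₂ <;> omega
  le_antisymm a b h₁ h₂ := by
    have : a.val = b.val := by rcases h₁ with h₁ | h₁ <;> rcases h₂ with h₂ | h₂ <;> omega
    exact @Fin.val_injective (m + 1) a b this

instance (m : ℕ) : Finite (J m) := inferInstanceAs (Finite (Fin (m + 1)))

/-- The initial point `0` of the fence. -/
def zero {m : ℕ} : J m := (0 : Fin (m + 1))

/-- The terminal point `m` of the fence. -/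
def last {m : ℕ} : J m := Fin.last m

end J

/-- The Alexandrov topology on a preordered set: open sets are the lower sets (ideals). -/
def alexTop (α : Type*) [Preorder α] : TopologicalSpace α where
  IsOpen s := IsLowerSet s
  isOpen_univ := isLowerSet_univ
  isOpen_inter _ _ := IsLowerSet.inter
  isOpen_sUnion _ := isLowerSet_sUnion

instance (m : ℕ) : TopologicalSpace (J m) := alexTop (J m)

/-- `P × P` can be covered by `n` open sets, each admitting a continuous section of
`q_m : P^{J_m} → P × P`, `γ ↦ (γ(0), γ(m))`. -/
def hasCCCover (P : Type*) [TopologicalSpace P] (m n : ℕ) : Prop :=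
  ∃ U : Fin n → Set (P × P), (∀ i, IsOpen (U i)) ∧ (⋃ i, U i) = Set.univ ∧
    ∀ i, ∃ s : C(U i, C(J m, P)),
      ∀ x : U i, (s x) J.zero = (x : P × P).1 ∧ (s x) J.last = (x : P × P).2

/-- The combinatorial complexity at length `m`. -/
noncomputable def CCm (P : Type*) [TopologicalSpace P] (m : ℕ) : ℕ∞ :=
  sInf ((↑) '' {n : ℕ | hasCCCover P m n})

/-- The combinatorial complexity `CC(P) = min_m CC_m(P)`. -/
noncomputable def CC (P : Type*) [TopologicalSpace P] : ℕ∞ := ⨅ m, CCm P m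

/-- `X × X` can be covered by `n` open sets, each admitting a continuous section of the
path fibration `X^I → X × X`. -/
def hasTCCover (X : Type*) [TopologicalSpace X] (n : ℕ) : Prop :=
  ∃ U : Fin n → Set (X × X), (∀ i, IsOpen (U i)) ∧ (⋃ i, U i) = Set.univ ∧
    ∀ i, ∃ s : C(U i, C(unitInterval, X)),
      ∀ x : U i, (s x) 0 = (x : X × X).1 ∧ (s x) 1 = (x : X × X).2

/-- Farber's topological complexity. -/
noncomputable def topComplexity (X : Type*) [TopologicalSpace X] : ℕ∞ :=
  sInf ((↑) '' {n : ℕ | hasTCCover X n})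

/-- A subset is contractible in the ambient space when its inclusion is null-homotopic. -/
def ContractibleIn {X : Type*} [TopologicalSpace X] (A : Set X) : Prop :=
  ∃ x₀ : X, ContinuousMap.Homotopic ⟨Subtype.val, continuous_subtype_val⟩
    (ContinuousMap.const A x₀)

/-- The (unreduced) Lusternik–Schnirelmann category. -/
noncomputable def cat (X : Type*) [TopologicalSpace X] : ℕ∞ :=
  sInf ((↑) '' {n : ℕ | ∃ U : Fin n → Set X, (∀ i, IsOpen (U i)) ∧ (⋃ i, U i) = Set.univ ∧
    ∀ i, ContractibleIn (U i)})

/-!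
In a finite space every point has a smallest open neighbourhood, so a continuous map out of the
fence `J m` is the same thing as a zigzag `x₀ ⤳ x₁ ⤺ x₂ ⤳ ⋯` in the specialization order.
Given a section `s` of the path fibration over a set `U ⊆ P × P`, view `t ↦ (s · t)` as one
path in the finite space `P ^ U`, and subdivide `I` so finely that every piece lies in the
preimage of the smallest neighbourhood of some point of the path: sampling the path at the
subdivision points and at these points gives a zigzag, i.e. a section of `q_m` over `U`.
Fences can be padded to a common length by repeating the endpoint. Conversely `J m` is path
connected, and precomposing a section of `q_m` with a path from `0` to `m` in `J m` gives a
section of the path fibration. So both invariants are infima over the same set of cover sizes.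
-/

open unitInterval

theorem Specializes.joined {X : Type*} [TopologicalSpace X] {x y : X} (h : x ⤳ y) :
    Joined x y :=
  joinedIn_univ.mp (h.joinedIn trivial trivial)

theorem continuous_of_specializes_map {X Y : Type*} [TopologicalSpace X] [AlexandrovDiscrete X]
    [TopologicalSpace Y] {f : X → Y} (hf : ∀ ⦃x y⦄, x ⤳ y → f x ⤳ f y) : Continuous f :=
  continuous_def.2 fun _ hV ↦
    isOpen_iff_forall_specializes.2 fun _ _ hxy hy ↦ (hf hxy).mem_open hV hy

namespace J

variable {m : ℕ}

theorem le_def {i j : J m} :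
    i ≤ j ↔ i.val = j.val ∨ (j.val % 2 = 1 ∧ (j.val = i.val + 1 ∨ i.val = j.val + 1)) :=
  Iff.rfl

theorem specializes_iff_le {i j : J m} : i ⤳ j ↔ i ≤ j :=
  ⟨fun h ↦ h.mem_open (isLowerSet_Iic j) self_mem_Iic,
    fun h ↦ specializes_iff_forall_open.2 fun _ hs hj ↦ hs h hj⟩

def mk (k : ℕ) (hk : k ≤ m) : J m := (⟨k, Nat.lt_succ_of_le hk⟩ : Fin (m + 1))

@[simp]
theorem val_mk (k : ℕ) (hk : k ≤ m) : (mk k hk).val = k := rfl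

theorem zero_eq_mk : (J.zero : J m) = mk 0 (Nat.zero_le m) := rfl

theorem last_eq_mk : (J.last : J m) = mk m le_rfl := rfl

theorem joined_zero_last (m : ℕ) : Joined (J.zero : J m) J.last := by
  suffices ∀ k (hk : k ≤ m), Joined (J.zero : J m) (mk k hk) from this m le_rfl
  intro k
  induction k with
  | zero => exact fun _ ↦ Joined.refl _
  | succ k ih =>
    intro hk
    have hstep : mk k (by omega) ⤳ mk (k + 1) hk ∨ mk (k + 1) hk ⤳ mk k (by omega) := by
      simp only [specializes_iff_le, le_def, val_mk, or_true, true_or, and_true]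
      omega
    exact (ih _).trans (hstep.elim Specializes.joined fun h ↦ h.joined.symm)

end J

section Zigzag

variable {Y : Type*} [TopologicalSpace Y]

/-- `h 0 ⤳ h 1 ⤺ h 2 ⤳ h 3 ⤺ ⋯`: the restriction of `h` to every fence is continuous. -/
def IsZigzag (h : ℕ → Y) : Prop :=
  ∀ k, h (2 * k) ⤳ h (2 * k + 1) ∧ h (2 * k + 2) ⤳ h (2 * k + 1)

theorem IsZigzag.specializes {h : ℕ → Y} (hh : IsZigzag h) {m : ℕ} {i j : J m} (hij : i ≤ j) :
    h i.val ⤳ h j.val := by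
  rcases J.le_def.1 hij with hv | ⟨hodd, hadj⟩
  · rw [hv]
  · obtain ⟨k, hk⟩ : ∃ k, j.val = 2 * k + 1 := ⟨j.val / 2, by omega⟩
    rw [hk]
    rcases hadj with hi | hi
    · rw [show i.val = 2 * k by omega]
      exact (hh k).1
    · rw [show i.val = 2 * k + 2 by omega]
      exact (hh k).2

theorem IsZigzag.continuous {h : ℕ → Y} (hh : IsZigzag h) (m : ℕ) :
    Continuous fun j : J m ↦ h j.val :=
  continuous_of_specializes_map fun _ _ hij ↦ hh.specializes (J.specializes_iff_le.1 hij)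

theorem exists_isZigzag_comp [AlexandrovDiscrete Y] (γ : C(I, Y)) :
    ∃ τ : ℕ → I, τ 0 = 0 ∧ (∃ N, τ (2 * N) = 1) ∧ IsZigzag (γ ∘ τ) := by
  obtain ⟨t, ht0, hmono, ⟨N, hN⟩, hcover⟩ := exists_monotone_Icc_subset_open_cover_unitInterval
    (c := fun s ↦ γ ⁻¹' nhdsKer {γ s}) (fun s ↦ isOpen_nhdsKer.preimage γ.continuous)
    (fun s _ ↦ mem_iUnion.2 ⟨s, subset_nhdsKer (mem_singleton _)⟩)
  choose S hS using hcover
  have hspec : ∀ k, ∀ u ∈ Icc (t k) (t (k + 1)), γ u ⤳ γ (S k) := fun k u hu ↦ by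
    simpa [mem_nhdsKer_iff_specializes] using hS k hu
  refine ⟨fun j ↦ if j % 2 = 0 then t (j / 2) else S (j / 2), by simp [ht0],
    ⟨N, by simp [hN]⟩, fun k ↦ ?_⟩
  simp only [Function.comp_apply, if_pos (by omega : 2 * k % 2 = 0),
    if_neg (by omega : (2 * k + 1) % 2 ≠ 0), if_pos (by omega : (2 * k + 2) % 2 = 0),
    show 2 * k / 2 = k by omega, show (2 * k + 1) / 2 = k by omega,
    show (2 * k + 2) / 2 = k + 1 by omega]
  exact ⟨hspec k _ ⟨le_rfl, hmono k.le_succ⟩, hspec k _ ⟨hmono k.le_succ, le_rfl⟩⟩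

end Zigzag

theorem exists_fence_section {X Y : Type*} [TopologicalSpace X] [Finite X] [TopologicalSpace Y]
    [AlexandrovDiscrete Y] (s : C(X, C(I, Y))) :
    ∃ m, ∃ s' : C(X, C(J m, Y)), ∀ x, s' x J.zero = s x 0 ∧ s' x J.last = s x 1 := by
  let γ : C(I, X → Y) := ⟨fun t x ↦ s x t, continuous_pi fun x ↦ (s x).continuous⟩
  obtain ⟨τ, hτ0, ⟨N, hτN⟩, hz⟩ := exists_isZigzag_comp γ
  have hzx : ∀ x, IsZigzag fun k ↦ s x (τ k) := fun x k ↦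
    ⟨specializes_pi.1 (hz k).1 x, specializes_pi.1 (hz k).2 x⟩
  have hF : Continuous fun p : X × J (2 * N) ↦ s p.1 (τ p.2.val) :=
    continuous_of_specializes_map fun p q hpq ↦
      (hpq.fst.map ((continuous_eval_const _).comp s.continuous)).trans
        ((hzx q.1).specializes (J.specializes_iff_le.1 hpq.snd))
  exact ⟨2 * N, ContinuousMap.curry ⟨_, hF⟩, fun x ↦ ⟨congrArg (s x) hτ0, congrArg (s x) hτN⟩⟩

namespace J

def clamp (m m' : ℕ) : C(J m', J m) :=
  ⟨fun j ↦ mk (min j.val m) (min_le_right _ _),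
    IsZigzag.continuous (h := fun k ↦ mk (min k m) (min_le_right _ _)) (fun k ↦ by
      simp only [specializes_iff_le, le_def, val_mk]
      omega) m'⟩

theorem clamp_zero (m m' : ℕ) : clamp m m' J.zero = J.zero := by
  simp [clamp, zero_eq_mk]

theorem clamp_last {m m' : ℕ} (h : m ≤ m') : clamp m m' J.last = J.last := by
  simp [clamp, last_eq_mk, h]

end J

def HasEndpointSection {P : Type*} [TopologicalSpace P] (A : Type*) [TopologicalSpace A] (a b : A)
    (U : Set (P × P)) : Prop :=
  ∃ s : C(U, C(A, P)), ∀ x : U, s x a = (x : P × P).1 ∧ s x b = (x : P × P).2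

theorem HasEndpointSection.precomp {P A B : Type*} [TopologicalSpace P] [TopologicalSpace A]
    [TopologicalSpace B] {a b : A} {U : Set (P × P)} (h : HasEndpointSection A a b U)
    (r : C(B, A)) {a' b' : B} (ha : r a' = a) (hb : r b' = b) :
    HasEndpointSection B a' b' U := by
  obtain ⟨s, hs⟩ := h
  exact ⟨(ContinuousMap.compRightContinuousMap P r).comp s, fun x ↦ by simpa [ha, hb] using hs x⟩

theorem HasEndpointSection.exists_fence {P : Type*} [TopologicalSpace P] [Finite P]
    {U : Set (P × P)} (h : HasEndpointSection I 0 1 U) :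
    ∃ m, HasEndpointSection (J m) J.zero J.last U := by
  obtain ⟨s, hs⟩ := h
  obtain ⟨m, s', hs'⟩ := exists_fence_section s
  exact ⟨m, s', fun x ↦ by simpa [hs'] using hs x⟩

theorem hasCCCover.hasTCCover {P : Type*} [TopologicalSpace P] {m n : ℕ}
    (h : hasCCCover P m n) : hasTCCover P n := by
  obtain ⟨U, hU, hcover, hs⟩ := h
  let γ := (J.joined_zero_last m).somePath
  exact ⟨U, hU, hcover, fun i ↦ HasEndpointSection.precomp (hs i) γ.toContinuousMap γ.source
    γ.target⟩

theorem hasTCCover.exists_hasCCCover {P : Type*} [TopologicalSpace P] [Finite P] {n : ℕ}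
    (h : hasTCCover P n) : ∃ m, hasCCCover P m n := by
  obtain ⟨U, hU, hcover, hs⟩ := h
  choose m hm using fun i ↦ HasEndpointSection.exists_fence (hs i)
  let M := Finset.univ.sup m
  have hmM : ∀ i, m i ≤ M := fun i ↦ Finset.le_sup (Finset.mem_univ i)
  exact ⟨M, U, hU, hcover, fun i ↦ (hm i).precomp (J.clamp (m i) M) (J.clamp_zero _ _)
    (J.clamp_last (hmM i))⟩

theorem TC_eq_CC_general
    (P : Type) [Finite P] [TopologicalSpace P] :
    topComplexity P = CC P := by
  have hsets : {n | hasTCCover P n} = ⋃ m, {n | hasCCCover P m n} :=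
    Set.ext fun _ ↦ ⟨fun h ↦ mem_iUnion.2 h.exists_hasCCCover,
      fun h ↦ (mem_iUnion.1 h).elim fun _ h ↦ h.hasTCCover⟩
  simp only [topComplexity, CC, CCm, hsets, sInf_image, iInf_iUnion]

/-- For a path connected finite space `P`, `TC(P) = CC(P)`. -/
theorem TC_eq_CC
    (P : Type) [PartialOrder P] [Finite P] [TopologicalSpace P] [PathConnectedSpace P]
    (hP : ∀ s : Set P, IsOpen s ↔ IsLowerSet s) :
    topComplexity P = CC P :=
  TC_eq_CC_general P
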